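/- arXiv:2512.00551 — 7 statements merged into one kernel-verified Lean document; each statement's English description precedes it below -/
import Mathlib

section
/- Let k > m > 0 be real numbers. If a, b, c, d are nonnegative reals satisfying both a^m + b^m = c^m + d^m and a^k + b^k = c^k + d^k, then {a, b} = {c, d} as unordered pairs. -/
/-!
Put `t = k / m > 1` and replace `a, b, c, d` by their `m`-th powers: the hypotheses say that the
pairs `{a^m, b^m}` and `{c^m, d^m}` have the same sum and the same sum under the strictly convex
map `x ↦ x ^ t`. For a fixed sum, `f x + f y` strictly grows as the pair spreads apart, so the
two pairs coincide, and `x ↦ x ^ m` is injective on `[0, ∞)`.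
-/

open Set

namespace StrictConvexOn

variable {𝕜 : Type*} [Field 𝕜] [LinearOrder 𝕜] [IsStrictOrderedRing 𝕜] {s : Set 𝕜}
  {f : 𝕜 → 𝕜} {x y z w : 𝕜}

theorem map_add_lt_map_add_of_lt_of_lt (hf : StrictConvexOn 𝕜 s f) (hw : w ∈ s) (hz : z ∈ s)
    (hwx : w < x) (hwy : w < y) (hsum : x + y = z + w) : f x + f y < f z + f w := by
  have hxz : x < z := by linarith
  have hyz : y < z := by linarith
  have hzw : 0 < z - w := by linarith
  -- Both `x` and `y` lie strictly below the chord from `(w, f w)` to `(z, f z)`.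
  have hx := hf.secant_strict_mono_aux1 hw hz hwx hxz
  have hy := hf.secant_strict_mono_aux1 hw hz hwy hyz
  have key : (z - w) * (f x + f y) < (z - w) * (f z + f w) := by
    linear_combination hx + hy + (f z - f w) * hsum
  exact lt_of_mul_lt_mul_left key hzw.le

theorem eq_and_eq_of_add_eq_of_map_add_eq (hf : StrictConvexOn 𝕜 s f) (hx : x ∈ s) (hy : y ∈ s)
    (hz : z ∈ s) (hw : w ∈ s) (hyx : y ≤ x) (hwz : w ≤ z) (hsum : x + y = z + w)
    (hfsum : f x + f y = f z + f w) : x = z ∧ y = w := by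
  rcases lt_trichotomy x z with hxz | rfl | hzx
  · have := hf.map_add_lt_map_add_of_lt_of_lt hw hz (by linarith) (by linarith) hsum
    exact absurd hfsum this.ne
  · exact ⟨rfl, by linarith⟩
  · have := hf.map_add_lt_map_add_of_lt_of_lt hy hx (by linarith) (by linarith) hsum.symm
    exact absurd hfsum this.ne'

theorem eq_or_eq_of_add_eq_of_map_add_eq (hf : StrictConvexOn 𝕜 s f) (hx : x ∈ s) (hy : y ∈ s)
    (hz : z ∈ s) (hw : w ∈ s) (hsum : x + y = z + w) (hfsum : f x + f y = f z + f w) :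
    (x = z ∧ y = w) ∨ (x = w ∧ y = z) := by
  rcases le_total y x with hyx | hxy <;> rcases le_total w z with hwz | hzw
  · exact .inl (hf.eq_and_eq_of_add_eq_of_map_add_eq hx hy hz hw hyx hwz hsum hfsum)
  · exact .inr (hf.eq_and_eq_of_add_eq_of_map_add_eq hx hy hw hz hyx hzw
      (by linarith) (by linarith))
  · have := hf.eq_and_eq_of_add_eq_of_map_add_eq hy hx hz hw hxy hwz
      (by linarith) (by linarith)
    exact .inr ⟨this.2, this.1⟩
  · have := hf.eq_and_eq_of_add_eq_of_map_add_eq hy hx hw hz hxy hzw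
      (by linarith) (by linarith)
    exact .inl ⟨this.2, this.1⟩

end StrictConvexOn

theorem stmt_3 (k m a b c d : ℝ) (hm : 0 < m) (hkm : m < k)
    (ha : 0 ≤ a) (hb : 0 ≤ b) (hc : 0 ≤ c) (hd : 0 ≤ d)
    (hpm : a ^ m + b ^ m = c ^ m + d ^ m)
    (hpk : a ^ k + b ^ k = c ^ k + d ^ k) :
    (a = c ∧ b = d) ∨ (a = d ∧ b = c) := by
  have hconv := strictConvexOn_rpow ((one_lt_div hm).mpr hkm)
  have hpow {x : ℝ} (hx : 0 ≤ x) : (x ^ m) ^ (k / m) = x ^ k := by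
    rw [← Real.rpow_mul hx, mul_div_cancel₀ k hm.ne']
  have hmem {x : ℝ} (hx : 0 ≤ x) : x ^ m ∈ Ici 0 := Real.rpow_nonneg hx m
  have hinj {x y : ℝ} (hx : 0 ≤ x) (hy : 0 ≤ y) : x ^ m = y ^ m → x = y :=
    (Real.rpow_left_inj hx hy hm.ne').mp
  have hpairs := hconv.eq_or_eq_of_add_eq_of_map_add_eq (hmem ha) (hmem hb) (hmem hc) (hmem hd)
    hpm (by simpa only [hpow ha, hpow hb, hpow hc, hpow hd] using hpk)
  exact hpairs.imp (And.imp (hinj ha hc) (hinj hb hd)) (And.imp (hinj ha hd) (hinj hb hc))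
end

section
/- Let k ≥ 2 be an integer and let a, b, c, d be nonnegative integers with a + b = c + d = S, S ≥ 2, and {a, b} ≠ {c, d} as unordered pairs. Then |a^k + b^k - c^k - d^k| ≥ k(k-1)·⌊S/2⌋^(k-2). -/
/-!
Order the pairs as `a ≤ b`, `c ≤ d` with `a < c`, and let `g t = (t + 1)^k - t^k`. Since `g` is
increasing, moving the pair `(a, b)` towards `(c - 1, d + 1)` only decreases `a^k + b^k`, so
`a^k + b^k - c^k - d^k ≥ g d - g (c - 1) ≥ g d - g (d - 1)`. This last second difference of `t ↦ t^k`
is at least `k (k - 1) d^(k - 2)`, by the even terms of the binomial expansion of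
`(d + 1)^k + (d - 1)^k`, and `d ≥ ⌊S/2⌋`.
-/

section SecondDifference

variable {R : Type*} [CommRing R] [LinearOrder R] [IsStrictOrderedRing R] {u : R}

/-- The two bounds are proved together because `(u ± 1)^(n+1) = u (u ± 1)^n ± (u ± 1)^n` couples the
sum and the difference of `(u + 1)^n` and `(u - 1)^n`. -/
theorem add_one_pow_add_sub_one_pow_bounds (hu : 0 ≤ u) (n : ℕ) :
    2 * u ^ n ≤ (u + 1) ^ n + (u - 1) ^ n ∧ 2 * n * u ^ (n - 1) ≤ (u + 1) ^ n - (u - 1) ^ n := by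
  induction n with
  | zero => norm_num
  | succ n ih =>
    obtain ⟨hsum, hdiff⟩ := ih
    have hsum' : (u + 1) ^ (n + 1) + (u - 1) ^ (n + 1)
        = u * ((u + 1) ^ n + (u - 1) ^ n) + ((u + 1) ^ n - (u - 1) ^ n) := by ring
    have hdiff' : (u + 1) ^ (n + 1) - (u - 1) ^ (n + 1)
        = u * ((u + 1) ^ n - (u - 1) ^ n) + ((u + 1) ^ n + (u - 1) ^ n) := by ring
    have hdiff_nonneg : 0 ≤ (u + 1) ^ n - (u - 1) ^ n := le_trans (by positivity) hdiff
    have hscaled : u * (2 * n * u ^ (n - 1)) = 2 * n * u ^ n := by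
      rcases n with _ | n
      · simp
      · rw [Nat.add_sub_cancel, pow_succ]; ring
    refine ⟨?_, ?_⟩
    · rw [hsum', pow_succ]
      linarith [mul_le_mul_of_nonneg_left hsum hu]
    · rw [hdiff', Nat.add_sub_cancel]
      push_cast
      linarith [mul_le_mul_of_nonneg_left hdiff hu]

theorem add_one_pow_add_sub_one_pow_second_order_ge (hu : 0 ≤ u) (n : ℕ) :
    2 * u ^ (n + 2) + (n + 2) * (n + 1) * u ^ n ≤ (u + 1) ^ (n + 2) + (u - 1) ^ (n + 2) := by
  induction n with
  | zero => exact le_of_eq (by push_cast; ring)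
  | succ n ih =>
    have hdiff := (add_one_pow_add_sub_one_pow_bounds hu (n + 2)).2
    rw [show n + 2 - 1 = n + 1 from rfl] at hdiff
    have hstep : (u + 1) ^ (n + 3) + (u - 1) ^ (n + 3)
        = u * ((u + 1) ^ (n + 2) + (u - 1) ^ (n + 2)) + ((u + 1) ^ (n + 2) - (u - 1) ^ (n + 2)) := by
      ring
    have hscaled : u * (2 * u ^ (n + 2) + (n + 2) * (n + 1) * u ^ n)
        = 2 * u ^ (n + 3) + (n + 2) * (n + 1) * u ^ (n + 1) := by ring
    rw [hstep]
    push_cast at hdiff ⊢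
    linarith [mul_le_mul_of_nonneg_left ih hu]

end SecondDifference

theorem monotone_add_sub_of_monotone_succ_sub {G : Type*} [AddCommGroup G] [PartialOrder G]
    [IsOrderedAddMonoid G] {f : ℕ → G} (hf : Monotone fun t ↦ f (t + 1) - f t) (e : ℕ) :
    Monotone fun t ↦ f (t + e) - f t := by
  induction e with
  | zero => simp [monotone_const]
  | succ e ih =>
    have hsplit : (fun t ↦ f (t + (e + 1)) - f t)
        = (fun t ↦ f (t + e) - f t) + (fun t ↦ f (t + e + 1) - f (t + e)) := by
      ext t; simp only [Pi.add_apply, ← add_assoc]; abel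
    rw [hsplit]
    exact ih.add (hf.comp (monotone_id.add_const e))

theorem monotone_succ_pow_sub_pow (k : ℕ) :
    Monotone fun t : ℕ ↦ ((t + 1 : ℕ) : ℤ) ^ k - (t : ℤ) ^ k := by
  refine monotone_nat_of_le_succ fun t ↦ ?_
  have h := (add_one_pow_add_sub_one_pow_bounds (u := ((t + 1 : ℕ) : ℤ)) (by positivity) k).1
  push_cast at h ⊢
  rw [add_sub_cancel_right] at h
  linarith

theorem mul_pow_le_pow_add_pow_sub_pow_sub_pow {a b c d : ℕ} (n : ℕ) (hac : a < c) (hcd : c ≤ d)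
    (hsum : a + b = c + d) :
    ((n + 2) * (n + 1) * d ^ n : ℤ) ≤ (a : ℤ) ^ (n + 2) + b ^ (n + 2) - c ^ (n + 2) - d ^ (n + 2) := by
  obtain ⟨e, rfl⟩ : ∃ e, c = a + e + 1 := ⟨c - a - 1, by omega⟩
  obtain ⟨q, rfl⟩ : ∃ q, d = q + 1 := ⟨d - 1, by omega⟩
  obtain rfl : b = q + 2 + e := by omega
  have hg := monotone_succ_pow_sub_pow (n + 2)
  have hspread := monotone_add_sub_of_monotone_succ_sub (f := fun t : ℕ ↦ (t : ℤ) ^ (n + 2)) hg e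
    (show a ≤ q + 2 by omega)
  have hmid := hg (show a + e ≤ q by omega)
  have hcurv := add_one_pow_add_sub_one_pow_second_order_ge (u := ((q + 1 : ℕ) : ℤ)) (by positivity) n
  simp only at hspread hmid
  push_cast at hspread hmid hcurv ⊢
  rw [add_sub_cancel_right] at hcurv
  ring_nf at hspread hmid hcurv ⊢
  linarith

theorem mul_pow_half_le_abs_pow_add_pow_sub_pow_sub_pow {a b c d S : ℕ} (n : ℕ) (hab : a ≤ b)
    (hcd : c ≤ d) (habS : a + b = S) (hcdS : c + d = S) (hac : a ≠ c) :
    ((n + 2) * (n + 1) * (S / 2 : ℕ) ^ n : ℤ) ≤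
      |(a : ℤ) ^ (n + 2) + b ^ (n + 2) - c ^ (n + 2) - d ^ (n + 2)| := by
  rcases hac.lt_or_gt with hac | hca
  · have hd : ((S / 2 : ℕ) : ℤ) ^ n ≤ (d : ℤ) ^ n :=
      pow_le_pow_left₀ (by positivity) (by exact_mod_cast (by omega : S / 2 ≤ d)) n
    calc ((n + 2) * (n + 1) * (S / 2 : ℕ) ^ n : ℤ) ≤ (n + 2) * (n + 1) * d ^ n := by gcongr
      _ ≤ _ := mul_pow_le_pow_add_pow_sub_pow_sub_pow (b := b) n hac hcd (by omega)
      _ ≤ _ := le_abs_self _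
  · have hb : ((S / 2 : ℕ) : ℤ) ^ n ≤ (b : ℤ) ^ n :=
      pow_le_pow_left₀ (by positivity) (by exact_mod_cast (by omega : S / 2 ≤ b)) n
    calc ((n + 2) * (n + 1) * (S / 2 : ℕ) ^ n : ℤ) ≤ (n + 2) * (n + 1) * b ^ n := by gcongr
      _ ≤ _ := mul_pow_le_pow_add_pow_sub_pow_sub_pow (b := d) n hca hab (by omega)
      _ ≤ _ := le_abs_self _
      _ = _ := by rw [← abs_neg]; ring_nf

theorem min_pow_add_max_pow (a b k : ℕ) :
    ((min a b : ℕ) : ℤ) ^ k + ((max a b : ℕ) : ℤ) ^ k = (a : ℤ) ^ k + (b : ℤ) ^ k := by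
  rcases le_total a b with h | h <;> simp [h, add_comm]

theorem stmt_5_general (k a b c d S : ℕ) (hk : 2 ≤ k)
    (hab : a + b = S) (hcd : c + d = S)
    (hne : ¬((a = c ∧ b = d) ∨ (a = d ∧ b = c))) :
    (k : ℤ) * (k - 1) * (S / 2 : ℕ) ^ (k - 2) ≤
      |(a : ℤ) ^ k + (b : ℤ) ^ k - (c : ℤ) ^ k - (d : ℤ) ^ k| := by
  obtain ⟨n, rfl⟩ : ∃ n, k = n + 2 := ⟨k - 2, by omega⟩
  have hsorted := mul_pow_half_le_abs_pow_add_pow_sub_pow_sub_pow n (min_le_max (a := a) (b := b))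
    (min_le_max (a := c) (b := d)) (by omega : min a b + max a b = S)
    (by omega : min c d + max c d = S) (by omega)
  have hcoef : ((n + 2 : ℕ) : ℤ) * ((n + 2 : ℕ) - 1) = (n + 2) * (n + 1) := by push_cast; ring
  have hpowers : (a : ℤ) ^ (n + 2) + b ^ (n + 2) - c ^ (n + 2) - d ^ (n + 2) =
      (min a b : ℕ) ^ (n + 2) + (max a b : ℕ) ^ (n + 2) - (min c d : ℕ) ^ (n + 2)
        - (max c d : ℕ) ^ (n + 2) := by
    rw [sub_sub, sub_sub, min_pow_add_max_pow, min_pow_add_max_pow]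
  rwa [Nat.add_sub_cancel, hcoef, hpowers]

theorem stmt_5 (k a b c d S : ℕ) (hk : 2 ≤ k)
    (hab : a + b = S) (hcd : c + d = S) (hS : 2 ≤ S)
    (hne : ¬((a = c ∧ b = d) ∨ (a = d ∧ b = c))) :
    (k : ℤ) * (k - 1) * (S / 2 : ℕ) ^ (k - 2) ≤
      |(a : ℤ) ^ k + (b : ℤ) ^ k - (c : ℤ) ^ k - (d : ℤ) ^ k| :=
  stmt_5_general k a b c d S hk hab hcd hne
end

section
/- Let k ≥ 2 be an integer and let a, b, c, d be nonnegative integers with a + b = c + d = S, S ≥ 2, and {a, b} ≠ {c, d} as unordered pairs. Then |a^k + b^k - c^k - d^k| ≥ k(k-1)·3^(2-k)·S^(k-2). -/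
/-! Assume `b ≤ a`, `d ≤ c` and `c < a`, so that `b < d ≤ c < a`, and write `a = c + t`,
`b = d - t` with `t ≥ 1`. Since the increments `(x + h)^k - x^k` grow with `x`, moving a pair
apart only increases `x^k + y^k`; hence
`a^k + b^k ≥ (c + 1)^k + (d - 1)^k ≥ c^k + d^k + ((c + 1)^k + (c - 1)^k - 2 c^k)`,
and by the binomial theorem this second difference is at least `k (k - 1) c^(k-2)`.
Finally `c ≥ S / 2 ≥ S / 3`. -/

open Finset

section OrderedSemiring

variable {R : Type*} [CommSemiring R] [PartialOrder R] [IsOrderedRing R]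

theorem add_pow_add_pow_le_pow_add_add_pow {x y h : R} (hx : 0 ≤ x) (hxy : x ≤ y) (hh : 0 ≤ h)
    (n : ℕ) : (x + h) ^ n + y ^ n ≤ x ^ n + (y + h) ^ n := by
  rw [add_comm x, add_comm y, ← geom_sum₂_mul_add h x, ← geom_sum₂_mul_add h y]
  calc _ = (∑ i ∈ range n, (h + x) ^ i * x ^ (n - 1 - i)) * h + x ^ n + y ^ n := by ring
    _ ≤ (∑ i ∈ range n, (h + y) ^ i * y ^ (n - 1 - i)) * h + x ^ n + y ^ n := by
      gcongr
      exact pow_nonneg (add_nonneg hh (hx.trans hxy)) _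
    _ = _ := by ring

end OrderedSemiring

section OrderedRing

variable {R : Type*} [CommRing R] [LinearOrder R] [IsStrictOrderedRing R]

theorem two_mul_pow_add_le_add_one_pow_add_sub_one_pow {y : R} (hy : 0 ≤ y) (k : ℕ) :
    2 * y ^ k + k * (k - 1) * y ^ (k - 2) ≤ (y + 1) ^ k + (y - 1) ^ k := by
  rcases lt_or_ge k 2 with hk | hk
  · interval_cases k <;> norm_num [two_mul]
  -- the odd-index terms cancel and the even-index ones are nonnegative
  have expand : (y + 1) ^ k + (y - 1) ^ k
      = ∑ m ∈ range (k + 1), (1 + (-1) ^ m) * y ^ (k - m) * k.choose m := by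
    rw [add_comm y, sub_eq_neg_add, add_pow, add_pow, ← sum_add_distrib]
    refine sum_congr rfl fun m _ => ?_
    ring
  have choose_two : 2 * (k.choose 2 : R) = k * (k - 1) := by
    rw [← Nat.cast_descFactorial_two, Nat.descFactorial_eq_factorial_mul_choose]
    push_cast [Nat.factorial_two]; ring
  rw [expand]
  calc 2 * y ^ k + k * (k - 1) * y ^ (k - 2)
      = ∑ m ∈ {0, 2}, (1 + (-1) ^ m) * y ^ (k - m) * k.choose m := by
        rw [sum_pair (by norm_num), ← choose_two]; norm_num; ring
    _ ≤ _ := by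
      refine sum_le_sum_of_subset_of_nonneg ?_ fun m _ _ => ?_
      · intro m; simp only [mem_insert, mem_singleton, mem_range]; omega
      · have : -1 ≤ (-1 : R) ^ m := by
          simpa only [abs_neg_one_pow] using neg_abs_le ((-1 : R) ^ m)
        have : 0 ≤ 1 + (-1 : R) ^ m := by linarith
        positivity

theorem pow_add_pow_add_le_add_pow_add_sub_pow {c d t : R} (ht : 1 ≤ t) (htd : t ≤ d)
    (hdc : d ≤ c) (k : ℕ) :
    c ^ k + d ^ k + k * (k - 1) * c ^ (k - 2) ≤ (c + t) ^ k + (d - t) ^ k := by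
  have spread := add_pow_add_pow_le_pow_add_add_pow (x := d - t) (y := c + 1) (h := t - 1)
    (by linarith) (by linarith) (by linarith) k
  have convex := add_pow_add_pow_le_pow_add_add_pow (x := d - 1) (y := c - 1) (h := 1)
    (by linarith) (by linarith) zero_le_one k
  have second_difference :=
    two_mul_pow_add_le_add_one_pow_add_sub_one_pow (y := c) (by linarith) k
  ring_nf at spread convex second_difference ⊢
  linarith

end OrderedRing

theorem mul_pow_div_le_pow_add_pow_sub (k : ℕ) {a b c d S : ℕ} (hab : a + b = S)
    (hcd : c + d = S) (hdc : d ≤ c) (hca : c < a) :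
    (k : ℝ) * (k - 1) * (S : ℝ) ^ (k - 2) / 3 ^ (k - 2) ≤
      (a : ℝ) ^ k + (b : ℝ) ^ k - (c : ℝ) ^ k - (d : ℝ) ^ k := by
  have hsum : (a : ℝ) + b = c + d := by exact_mod_cast hab.trans hcd.symm
  have key := pow_add_pow_add_le_add_pow_add_sub_pow (c := (c : ℝ)) (d := d) (t := a - c)
    (by rw [le_sub_iff_add_le']; exact_mod_cast hca)
    (by linarith [(b.cast_nonneg : (0 : ℝ) ≤ b)])
    (by exact_mod_cast hdc) k
  rw [add_sub_cancel, show (d : ℝ) - (a - c) = b by linarith] at key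
  have hk : 0 ≤ (k : ℝ) * (k - 1) := by
    rcases k.eq_zero_or_pos with rfl | hk
    · simp
    · have : (1 : ℝ) ≤ k := by exact_mod_cast hk
      positivity
  have hS : (S : ℝ) / 3 ≤ c := by
    rw [div_le_iff₀ three_pos]; exact_mod_cast (by omega : S ≤ c * 3)
  calc (k : ℝ) * (k - 1) * (S : ℝ) ^ (k - 2) / 3 ^ (k - 2)
      = k * (k - 1) * ((S : ℝ) / 3) ^ (k - 2) := by rw [div_pow, mul_div_assoc]
    _ ≤ k * (k - 1) * (c : ℝ) ^ (k - 2) := by gcongr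
    _ ≤ _ := by linarith

theorem stmt_6_general (k a b c d S : ℕ)
    (hab : a + b = S) (hcd : c + d = S)
    (hne : ¬((a = c ∧ b = d) ∨ (a = d ∧ b = c))) :
    (k : ℝ) * (k - 1) * (S : ℝ) ^ (k - 2) / 3 ^ (k - 2) ≤
      |(a : ℝ) ^ k + (b : ℝ) ^ k - (c : ℝ) ^ k - (d : ℝ) ^ k| := by
  wlog hba : b ≤ a generalizing a b
  · rw [add_comm ((a : ℝ) ^ k)]
    exact this b a (by omega) (by tauto) (by omega)
  wlog hdc : d ≤ c generalizing c d
  · rw [sub_right_comm]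
    exact this d c (by omega) (by tauto) (by omega)
  rcases lt_or_gt_of_ne (fun hac : a = c => hne (.inl ⟨hac, by omega⟩)) with hac | hca
  · have := mul_pow_div_le_pow_add_pow_sub k hcd hab hba hac
    linarith [neg_le_abs ((a : ℝ) ^ k + (b : ℝ) ^ k - (c : ℝ) ^ k - (d : ℝ) ^ k)]
  · exact (mul_pow_div_le_pow_add_pow_sub k hab hcd hdc hca).trans (le_abs_self _)

theorem stmt_6 (k a b c d S : ℕ) (hk : 2 ≤ k)
    (hab : a + b = S) (hcd : c + d = S) (hS : 2 ≤ S)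
    (hne : ¬((a = c ∧ b = d) ∨ (a = d ∧ b = c))) :
    (k : ℝ) * (k - 1) * (S : ℝ) ^ (k - 2) / 3 ^ (k - 2) ≤
      |(a : ℝ) ^ k + (b : ℝ) ^ k - (c : ℝ) ^ k - (d : ℝ) ^ k| :=
  stmt_6_general k a b c d S hab hcd hne
end

section
/- Let I ⊆ ℝ be an interval, φ : I → ℝ strictly convex, and S ∈ ℝ. Define F(x) = φ(x) + φ(S - x) on D = I ∩ (S - I). If x₁, x₂ ∈ D and F(x₁) = F(x₂), then {x₁, S - x₁} = {x₂, S - x₂} as unordered pairs. -/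
/-!
For strictly convex `φ`, moving the two points of a pair with fixed sum `S` apart strictly
increases `φ x + φ (S - x)`: the inner pair is made of two convex combinations of the outer
one with swapped weights. Hence `φ x + φ (S - x)` is a strictly increasing function of
`|2x - S|`, and equal values force equal distances from `S / 2`.
-/

variable {𝕜 β : Type*} [Field 𝕜] [LinearOrder 𝕜] [IsStrictOrderedRing 𝕜]
  [AddCommGroup β] [PartialOrder β] [IsOrderedCancelAddMonoid β] [Module 𝕜 β]
  {s : Set 𝕜} {f : 𝕜 → β}

theorem StrictConvexOn.map_add_map_lt_of_add_eq (hf : StrictConvexOn 𝕜 s f)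
    {a b c d : 𝕜} (ha : a ∈ s) (hb : b ∈ s) (hsum : c + d = a + b) (hac : a < c) (had : a < d) :
    f c + f d < f a + f b := by
  have hab : 0 < b - a := by linarith
  set t := (c - a) / (b - a)
  have ht : t * (b - a) = c - a := div_mul_cancel₀ _ hab.ne'
  have ht₀ : 0 < t := div_pos (by linarith) hab
  have ht₁ : t < 1 := (div_lt_one hab).2 (by linarith)
  have hc : (1 - t) • a + t • b = c := by simp only [smul_eq_mul]; linear_combination ht
  have hd : t • a + (1 - t) • b = d := by simp only [smul_eq_mul]; linear_combination -hsum - ht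
  have hfc := hf.2 ha hb (by linarith : a ≠ b) (sub_pos.2 ht₁) ht₀ (by ring)
  have hfd := hf.2 ha hb (by linarith : a ≠ b) ht₀ (sub_pos.2 ht₁) (by ring)
  rw [hc] at hfc
  rw [hd] at hfd
  calc f c + f d < ((1 - t) • f a + t • f b) + (t • f a + (1 - t) • f b) := add_lt_add hfc hfd
    _ = f a + f b := by module

theorem StrictConvexOn.map_add_map_sub_lt_of_abs_lt (hf : StrictConvexOn 𝕜 s f) {S x y : 𝕜}
    (hxy : |2 * x - S| < |2 * y - S|) (hy : y ∈ s) (hSy : S - y ∈ s) :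
    f x + f (S - x) < f y + f (S - y) := by
  wlog hyS : 2 * y ≤ S generalizing y
  · have hsymm : |2 * (S - y) - S| = |2 * y - S| := by rw [← abs_neg]; ring_nf
    have := this (hsymm ▸ hxy) hSy (by rwa [sub_sub_cancel]) (by linarith)
    rwa [sub_sub_cancel, add_comm (f (S - y))] at this
  rw [abs_of_nonpos (by linarith : 2 * y - S ≤ 0)] at hxy
  obtain ⟨hlo, hhi⟩ := abs_lt.1 hxy
  exact hf.map_add_map_lt_of_add_eq hy hSy (by ring) (by linarith) (by linarith)

theorem stmt_7 (I : Set ℝ) (φ : ℝ → ℝ) (hφ : StrictConvexOn ℝ I φ)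
    (S x₁ x₂ : ℝ)
    (h₁ : x₁ ∈ I ∩ {x : ℝ | S - x ∈ I})
    (h₂ : x₂ ∈ I ∩ {x : ℝ | S - x ∈ I})
    (hF : φ x₁ + φ (S - x₁) = φ x₂ + φ (S - x₂)) :
    (x₁ = x₂ ∧ S - x₁ = S - x₂) ∨ (x₁ = S - x₂ ∧ S - x₁ = x₂) := by
  have habs : |2 * x₁ - S| = |2 * x₂ - S| := by
    rcases lt_trichotomy |2 * x₁ - S| |2 * x₂ - S| with h | h | h
    · exact absurd hF (hφ.map_add_map_sub_lt_of_abs_lt h h₂.1 h₂.2).ne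
    · exact h
    · exact absurd hF (hφ.map_add_map_sub_lt_of_abs_lt h h₁.1 h₁.2).ne'
  rcases abs_eq_abs.1 habs with h | h
  · exact Or.inl ⟨by linarith, by linarith⟩
  · exact Or.inr ⟨by linarith, by linarith⟩
end

section
/- Let k > 1 be real, S > 0, h > 0. If there exist nonnegative reals a, b, c, d with a + b = S, c + d = S + h, and a^k + b^k = c^k + d^k, then S ≥ h / (2^((k-1)/k) - 1). -/
/-! The equal `k`-th power sums give both pairs one `ℓᵏ` norm `N`. Superadditivity of
`t ↦ tᵏ` gives `N ≤ a + b = S`, while the power-mean inequality gives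
`S + h = c + d ≤ 2 ^ ((k - 1) / k) * N`. -/

namespace Real

lemma rpow_add_le_two_rpow_mul_rpow_add_rpow {p x y : ℝ} (hx : 0 ≤ x) (hy : 0 ≤ y)
    (hp : 1 ≤ p) : (x + y) ^ p ≤ 2 ^ (p - 1) * (x ^ p + y ^ p) := by
  lift x to NNReal using hx
  lift y to NNReal using hy
  exact_mod_cast NNReal.rpow_add_le_mul_rpow_add_rpow x y hp

lemma add_le_two_rpow_mul_rpow_add_rpow_rpow_one_div {p x y : ℝ} (hx : 0 ≤ x) (hy : 0 ≤ y)
    (hp : 1 ≤ p) : x + y ≤ 2 ^ ((p - 1) / p) * (x ^ p + y ^ p) ^ (1 / p) := by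
  have hp0 : 0 < p := by linarith
  rw [one_div, div_eq_mul_inv, rpow_mul zero_le_two, ← mul_rpow (by positivity) (by positivity),
    le_rpow_inv_iff_of_pos (by positivity) (by positivity) hp0]
  exact rpow_add_le_two_rpow_mul_rpow_add_rpow hx hy hp

end Real

theorem stmt_17_general (k S h : ℝ) (hk : 1 < k)
    (hex : ∃ a b c d : ℝ, 0 ≤ a ∧ 0 ≤ b ∧ 0 ≤ c ∧ 0 ≤ d ∧
      a + b = S ∧ c + d = S + h ∧ a ^ k + b ^ k = c ^ k + d ^ k) :
    S ≥ h / (2 ^ ((k - 1) / k) - 1) := by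
  obtain ⟨a, b, c, d, ha, hb, hc, hd, rfl, hcd, heq⟩ := hex
  have hpow_sum : (a ^ k + b ^ k) ^ (1 / k) ≤ a + b := Real.rpow_add_rpow_le_add ha hb hk.le
  have hgrowth : a + b + h ≤ 2 ^ ((k - 1) / k) * (a + b) := calc
    a + b + h = c + d := hcd.symm
    _ ≤ 2 ^ ((k - 1) / k) * (c ^ k + d ^ k) ^ (1 / k) :=
      Real.add_le_two_rpow_mul_rpow_add_rpow_rpow_one_div hc hd hk.le
    _ ≤ 2 ^ ((k - 1) / k) * (a + b) := by
      rw [← heq]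
      gcongr
  have hconst : 1 < (2 : ℝ) ^ ((k - 1) / k) :=
    Real.one_lt_rpow one_lt_two (div_pos (by linarith) (by linarith))
  rw [ge_iff_le, div_le_iff₀ (by linarith)]
  linarith

theorem stmt_17 (k S h : ℝ) (hk : 1 < k) (hS : 0 < S) (hh : 0 < h)
    (hex : ∃ a b c d : ℝ, 0 ≤ a ∧ 0 ≤ b ∧ 0 ≤ c ∧ 0 ≤ d ∧
      a + b = S ∧ c + d = S + h ∧ a ^ k + b ^ k = c ^ k + d ^ k) :
    S ≥ h / (2 ^ ((k - 1) / k) - 1) :=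
  stmt_17_general k S h hk hex
end

section
/- Let k ≥ 2 be an integer, X > 0 a real number, and 0 ≤ δ ≤ X. Then ((X - δ)^k + (X + δ)^k)/2 ≤ (X + (k-1)·δ²/(2X))^k. -/
/-!
Put `t = δ / X`; after scaling by `X ^ k` the claim is `E_k(t) ≤ (1 + (k - 1) t² / 2) ^ k`, where
`E_n`, `O_n` are the even and odd parts of `t ↦ (1 + t) ^ n`. Since `E` is even we may take `t ≥ 0`.
The recursions `E_{n+1} = E_n + t O_n`, `O_{n+1} = O_n + t E_n` give `O_n ≤ n t E_n`, hence
`E_{n+1} ≤ (1 + n t²) E_n` and `E_k ≤ ∏_{i<k} (1 + i t²)`. Pairing the factors `i` and `k - 1 - i`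
and applying AM-GM to each pair bounds the product by `(1 + (k - 1) t² / 2) ^ k`.
-/

open Finset

theorem prod_range_one_add_mul_le {s : ℝ} (hs : 0 ≤ s) (n : ℕ) :
    ∏ i ∈ range n, (1 + i * s) ≤ (1 + (n - 1) * s / 2) ^ n := by
  obtain rfl | hn := Nat.eq_zero_or_pos n
  · simp
  have hfac (m : ℕ) : 0 ≤ 1 + (m : ℝ) * s := by positivity
  have hmean : 0 ≤ 1 + ((n : ℝ) - 1) * s / 2 := by
    have hn1 : (1 : ℝ) ≤ n := by exact_mod_cast hn
    have := mul_nonneg (sub_nonneg.2 hn1) hs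
    linarith
  have hpair : ∀ i ∈ range n,
      (1 + i * s) * (1 + ((n - 1 - i : ℕ) : ℝ) * s) ≤ (1 + (n - 1) * s / 2) ^ 2 := by
    intro i hi
    have hin : 1 + i ≤ n := by have := mem_range.1 hi; omega
    rw [Nat.sub_sub, Nat.cast_sub hin]
    push_cast
    nlinarith [sq_nonneg ((2 * i + 1 - n) * s)]
  have hsq : (∏ i ∈ range n, (1 + i * s)) ^ 2 ≤ ((1 + (n - 1) * s / 2) ^ n) ^ 2 :=
    calc (∏ i ∈ range n, (1 + i * s)) ^ 2
        = ∏ i ∈ range n, (1 + i * s) * (1 + ((n - 1 - i : ℕ) : ℝ) * s) := by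
          rw [sq, prod_mul_distrib, prod_range_reflect (fun i : ℕ => 1 + (i : ℝ) * s) n]
      _ ≤ ∏ _i ∈ range n, (1 + (n - 1) * s / 2) ^ 2 :=
          prod_le_prod (fun i _ => mul_nonneg (hfac i) (hfac _)) hpair
      _ = ((1 + (n - 1) * s / 2) ^ n) ^ 2 := by rw [prod_const, card_range, ← pow_mul, ← pow_mul']
  exact (pow_le_pow_iff_left₀ (prod_nonneg fun i _ => hfac i) (pow_nonneg hmean n) two_ne_zero).1 hsq

-- The even and odd parts of `t ↦ (1 + t) ^ n`.
noncomputable def evenPart (t : ℝ) (n : ℕ) : ℝ := ((1 - t) ^ n + (1 + t) ^ n) / 2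

noncomputable def oddPart (t : ℝ) (n : ℕ) : ℝ := ((1 + t) ^ n - (1 - t) ^ n) / 2

theorem evenPart_succ (t : ℝ) (n : ℕ) : evenPart t (n + 1) = evenPart t n + t * oddPart t n := by
  simp only [evenPart, oddPart, pow_succ]; ring

theorem oddPart_succ (t : ℝ) (n : ℕ) : oddPart t (n + 1) = oddPart t n + t * evenPart t n := by
  simp only [evenPart, oddPart, pow_succ]; ring

theorem evenPart_neg (t : ℝ) (n : ℕ) : evenPart (-t) n = evenPart t n := by
  rw [evenPart, evenPart, sub_neg_eq_add, ← sub_eq_add_neg, add_comm]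

theorem evenPart_abs (t : ℝ) (n : ℕ) : evenPart |t| n = evenPart t n := by
  rcases abs_choice t with h | h <;> rw [h]
  exact evenPart_neg t n

section Nonneg

variable {t : ℝ} (ht : 0 ≤ t)
include ht

theorem abs_one_sub_pow_le_one_add_pow (n : ℕ) : |(1 - t) ^ n| ≤ (1 + t) ^ n := by
  rw [abs_pow]
  exact pow_le_pow_left₀ (abs_nonneg _) (abs_le.2 ⟨by linarith, by linarith⟩) n

theorem evenPart_nonneg (n : ℕ) : 0 ≤ evenPart t n := by
  have := (abs_le.1 (abs_one_sub_pow_le_one_add_pow ht n)).1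
  unfold evenPart; linarith

theorem oddPart_nonneg (n : ℕ) : 0 ≤ oddPart t n := by
  have := (abs_le.1 (abs_one_sub_pow_le_one_add_pow ht n)).2
  unfold oddPart; linarith

theorem oddPart_le (n : ℕ) : oddPart t n ≤ n * t * evenPart t n := by
  induction n with
  | zero => simp [oddPart]
  | succ n ih =>
    have hmono : evenPart t n ≤ evenPart t (n + 1) := by
      rw [evenPart_succ]
      exact le_add_of_nonneg_right (mul_nonneg ht (oddPart_nonneg ht n))
    push_cast
    calc oddPart t (n + 1) = oddPart t n + t * evenPart t n := oddPart_succ t n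
      _ ≤ (n + 1) * t * evenPart t n := by linarith
      _ ≤ (n + 1) * t * evenPart t (n + 1) := by gcongr

theorem evenPart_succ_le (n : ℕ) : evenPart t (n + 1) ≤ (1 + n * t ^ 2) * evenPart t n := by
  rw [evenPart_succ]
  linarith [mul_le_mul_of_nonneg_left (oddPart_le ht n) ht]

theorem evenPart_le_prod (n : ℕ) : evenPart t n ≤ ∏ i ∈ range n, (1 + i * t ^ 2) := by
  induction n with
  | zero => simp [evenPart]
  | succ n ih =>
    rw [prod_range_succ, mul_comm]
    exact (evenPart_succ_le ht n).trans (by gcongr)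

end Nonneg

theorem evenPart_le (t : ℝ) (n : ℕ) : evenPart t n ≤ (1 + (n - 1) * t ^ 2 / 2) ^ n := by
  rw [← evenPart_abs, ← sq_abs t]
  exact (evenPart_le_prod (abs_nonneg t) n).trans (prod_range_one_add_mul_le (sq_nonneg _) n)

theorem stmt_18_general (k : ℕ) (X δ : ℝ) (hX : 0 < X) :
    ((X - δ) ^ k + (X + δ) ^ k) / 2 ≤ (X + (k - 1) * δ ^ 2 / (2 * X)) ^ k := by
  have hsub : X - δ = X * (1 - δ / X) := by field_simp
  have hadd : X + δ = X * (1 + δ / X) := by field_simp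
  calc ((X - δ) ^ k + (X + δ) ^ k) / 2 = X ^ k * evenPart (δ / X) k := by
        rw [hsub, hadd, mul_pow, mul_pow, evenPart]; ring
    _ ≤ X ^ k * (1 + (k - 1) * (δ / X) ^ 2 / 2) ^ k := by gcongr; exact evenPart_le _ k
    _ = (X + (k - 1) * δ ^ 2 / (2 * X)) ^ k := by rw [← mul_pow]; congr 1; field_simp

theorem stmt_18 (k : ℕ) (hk : 2 ≤ k) (X δ : ℝ) (hX : 0 < X)
    (hδ0 : 0 ≤ δ) (hδX : δ ≤ X) :
    ((X - δ) ^ k + (X + δ) ^ k) / 2 ≤ (X + (k - 1) * δ ^ 2 / (2 * X)) ^ k :=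
  stmt_18_general k X δ hX
end

section
/- Let k ≥ 1 and let a, b, c, d be nonnegative integers with a^k + b^k = c^k + d^k and (c + d) - (a + b) = h ≠ 0. Let M = max{a, b, c, d}. Then M ≥ 2 and k ≤ M·log 2, where log denotes the natural logarithm. -/
/-!
Write `M = max a b` and `m = max c d`. If `M = m`, the equation forces `min a b = min c d` as well,
so `a + b = c + d`; hence, after swapping the two sides, `m < M`. Then
`M ^ k ≤ a ^ k + b ^ k = c ^ k + d ^ k ≤ 2 m ^ k`, so `m ≥ 1`, `M ≥ 2` and `k log (M / m) ≤ log 2`,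
while `log (M / m) ≥ 1 - m / M ≥ 1 / M`.
-/

open Real

theorem Real.nat_le_mul_log_of_pow_le_mul_pow {x y c : ℝ} {k : ℕ} (hy : 0 < y) (hxy : y + 1 ≤ x)
    (h : x ^ k ≤ c * y ^ k) : (k : ℝ) ≤ x * log c := by
  have hx : 0 < x := by linarith
  have hratio : (x / y) ^ k ≤ c := by
    rwa [div_pow, div_le_iff₀ (by positivity)]
  have hlog : k * log (x / y) ≤ log c := by
    rw [← log_pow]
    exact log_le_log (by positivity) hratio
  have hinv : 1 ≤ x * log (x / y) :=
    calc 1 ≤ x * (1 - (x / y)⁻¹) := by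
          rw [inv_div, mul_sub, mul_div_cancel₀ _ hx.ne']
          linarith
      _ ≤ x * log (x / y) :=
          mul_le_mul_of_nonneg_left (one_sub_inv_le_log_of_pos (by positivity)) hx.le
  calc (k : ℝ) ≤ k * (x * log (x / y)) := le_mul_of_one_le_right (Nat.cast_nonneg k) hinv
    _ = x * (k * log (x / y)) := by ring
    _ ≤ x * log c := mul_le_mul_of_nonneg_left hlog hx.le

namespace Nat

variable {k x y z w : ℕ}

theorem min_pow_add_max_pow (x y k : ℕ) : min x y ^ k + max x y ^ k = x ^ k + y ^ k := by
  rcases le_total x y with h | h <;> simp [h, add_comm]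

theorem add_eq_add_of_pow_add_pow_eq_of_max_eq (hk : k ≠ 0) (h : x ^ k + y ^ k = z ^ k + w ^ k)
    (hmax : max x y = max z w) : x + y = z + w := by
  have hxy := min_pow_add_max_pow x y k
  have hzw := min_pow_add_max_pow z w k
  rw [hmax] at hxy
  have hmin : min x y = min z w := Nat.pow_left_injective hk (by dsimp only; omega)
  rw [← min_add_max x y, ← min_add_max z w, hmin, hmax]

theorem max_pow_le_two_mul_max_pow (h : x ^ k + y ^ k = z ^ k + w ^ k) :
    max x y ^ k ≤ 2 * max z w ^ k :=
  calc max x y ^ k ≤ x ^ k + y ^ k := by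
        rw [← min_pow_add_max_pow]
        exact le_add_self
    _ = z ^ k + w ^ k := h
    _ ≤ max z w ^ k + max z w ^ k :=
        add_le_add (Nat.pow_le_pow_left (le_max_left z w) k)
          (Nat.pow_le_pow_left (le_max_right z w) k)
    _ = 2 * max z w ^ k := (two_mul _).symm

theorem two_le_max_and_le_max_mul_log_two (hk : k ≠ 0) (h : x ^ k + y ^ k = z ^ k + w ^ k)
    (hlt : max z w < max x y) : 2 ≤ max x y ∧ (k : ℝ) ≤ (max x y : ℕ) * Real.log 2 := by
  have hle := max_pow_le_two_mul_max_pow h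
  have hpos : 0 < max z w := by
    by_contra! hzero
    rw [Nat.le_zero.mp hzero, zero_pow hk, mul_zero, Nat.le_zero, pow_eq_zero_iff hk] at hle
    omega
  refine ⟨by omega, Real.nat_le_mul_log_of_pow_le_mul_pow (y := (max z w : ℕ)) ?_ ?_ ?_⟩
  · exact_mod_cast hpos
  · exact_mod_cast hlt
  · exact_mod_cast hle

end Nat

theorem stmt_19 (k : ℕ) (hk : 1 ≤ k) (a b c d : ℕ)
    (hpow : a ^ k + b ^ k = c ^ k + d ^ k)
    (hne : ((c : ℤ) + d) - ((a : ℤ) + b) ≠ 0) :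
    2 ≤ max (max a b) (max c d) ∧
    (k : ℝ) ≤ (max (max a b) (max c d) : ℝ) * Real.log 2 := by
  simp only [← Nat.cast_max]
  have hk0 : k ≠ 0 := by omega
  have hsum : a + b ≠ c + d := by omega
  have hmax : max a b ≠ max c d := fun h ↦
    hsum (Nat.add_eq_add_of_pow_add_pow_eq_of_max_eq hk0 hpow h)
  rcases hmax.lt_or_gt with hlt | hlt
  · rw [max_eq_right hlt.le]
    exact Nat.two_le_max_and_le_max_mul_log_two hk0 hpow.symm hlt
  · rw [max_eq_left hlt.le]
    exact Nat.two_le_max_and_le_max_mul_log_two hk0 hpow hlt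
end
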